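/- Let B be an annihilator nilpotent skew brace. If B is finitely generated as a skew brace, then B satisfies the ascending chain condition on sub skew braces. -/
import Mathlib


/-- A skew brace: a type with two group structures `(B,+)` and `(B,∘)`
(the multiplicative group is written with `*`) sharing the same underlying set,
such that `a ∘ (b + c) = a ∘ b - a + a ∘ c`. -/
class SkewBrace (B : Type*) extends AddGroup B, Group B where
  circ_add : ∀ a b c : B, a * (b + c) = a * b - a + a * c

namespace SkewBrace

variable {B : Type*} [SkewBrace B]

/-- `lam a b = -a + a ∘ b`, i.e. `λ_a(b)`. -/
def lam (a b : B) : B := -a + a * b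

/-- `a * b` (the star operation) `= λ_a(b) - b = -a + a ∘ b - b`. -/
def starOp (a b : B) : B := -a + a * b - b

/-- `X * Y` : the additive subgroup generated by all `x * y`, `x ∈ X`, `y ∈ Y`,
regarded as a set. -/
def starSpan (X Y : Set B) : Set B :=
  (AddSubgroup.closure {z : B | ∃ x ∈ X, ∃ y ∈ Y, z = starOp x y} : AddSubgroup B)

/-- `[X,Y]₊` : the additive subgroup generated by all additive commutators
`x + y - x - y`, `x ∈ X`, `y ∈ Y`, regarded as a set. -/
def addCommSpan (X Y : Set B) : Set B :=
  (AddSubgroup.closure {z : B | ∃ x ∈ X, ∃ y ∈ Y, z = x + y - x - y} : AddSubgroup B)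

/-- A sub skew brace: a subset containing `0` and closed under both group
operations and both inverses. -/
def IsSubSkewBrace (S : Set B) : Prop :=
  0 ∈ S ∧ (∀ a ∈ S, ∀ b ∈ S, a + b ∈ S) ∧ (∀ a ∈ S, -a ∈ S) ∧
    (∀ a ∈ S, ∀ b ∈ S, a * b ∈ S) ∧ (∀ a ∈ S, a⁻¹ ∈ S)

/-- An ideal: a sub skew brace that is normal in `(B,+)` and in `(B,∘)` and
invariant under all `λ_a`. -/
def IsIdeal (S : Set B) : Prop :=
  IsSubSkewBrace S ∧ (∀ a : B, ∀ i ∈ S, a + i - a ∈ S) ∧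
    (∀ a : B, ∀ i ∈ S, a * i * a⁻¹ ∈ S) ∧ (∀ a : B, ∀ i ∈ S, lam a i ∈ S)

/-- The annihilator `Ann(B) = {x | x∘a = a∘x = x+a = a+x for all a}`. -/
def annSet (B : Type*) [SkewBrace B] : Set B :=
  {x | ∀ a : B, x * a = a * x ∧ x * a = x + a ∧ x + a = a + x}

/-- The annihilator series: `Ann₀(B) = 0` and `Ann_{n+1}(B)` is the preimage of
`Ann(B/Annₙ(B))` under the quotient map; membership is expressed via coset
equalities modulo `Annₙ(B)`. -/
def annSeries (B : Type*) [SkewBrace B] : ℕ → Set B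
  | 0 => {0}
  | n + 1 => {x | ∀ a : B,
      x * a - a * x ∈ annSeries B n ∧
      x * a - (x + a) ∈ annSeries B n ∧
      (x + a) - (a + x) ∈ annSeries B n}

/-- `B` is annihilator nilpotent if `Annₙ(B) = B` for some `n`. -/
def AnnNilpotent (B : Type*) [SkewBrace B] : Prop :=
  ∃ n : ℕ, annSeries B n = Set.univ

/-- `leftPow B n` is `B^{n+1}`: `B¹ = B`, `B^{n+1} = B * Bⁿ`. -/
def leftPow (B : Type*) [SkewBrace B] : ℕ → Set B
  | 0 => Set.univ
  | n + 1 => starSpan Set.univ (leftPow B n)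

/-- `rightPow B n` is `B⁽ⁿ⁺¹⁾`: `B⁽¹⁾ = B`, `B⁽ⁿ⁺¹⁾ = B⁽ⁿ⁾ * B`. -/
def rightPow (B : Type*) [SkewBrace B] : ℕ → Set B
  | 0 => Set.univ
  | n + 1 => starSpan (rightPow B n) Set.univ

/-- `B` is left nilpotent if `Bⁿ = 0` for some `n ≥ 1`. -/
def LeftNilpotent (B : Type*) [SkewBrace B] : Prop :=
  ∃ n : ℕ, leftPow B n = ({0} : Set B)

/-- `B` is right nilpotent if `B⁽ⁿ⁾ = 0` for some `n ≥ 1`. -/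
def RightNilpotent (B : Type*) [SkewBrace B] : Prop :=
  ∃ n : ℕ, rightPow B n = ({0} : Set B)

/-- `strongPow B n` is `B^[n+1]`: `B^[1] = B`, and `B^[n+1]` is the additive
subgroup generated by `⋃_{i=1}^{n} B^[i] * B^[n+1-i]`. -/
def strongPow (B : Type*) [SkewBrace B] : ℕ → Set B
  | 0 => Set.univ
  | n + 1 => (AddSubgroup.closure (⋃ j : Fin (n + 1),
      {z : B | ∃ x ∈ strongPow B j.1, ∃ y ∈ strongPow B (n - j.1), z = starOp x y}) :
        AddSubgroup B)
  decreasing_by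
  · exact j.isLt
  · omega

/-- `B` is strongly nilpotent if `B^[n] = 0` for some `n ≥ 1`. -/
def StronglyNilpotent (B : Type*) [SkewBrace B] : Prop :=
  ∃ n : ℕ, strongPow B n = ({0} : Set B)

/-- `gammaAux B n` is `Γ_[n+1](B)`: `Γ_[1](B) = B` and, for `n ≥ 2`, `Γ_[n](B)` is
the additive subgroup generated by the sets `Γ_[i](B) * Γ_[n-i](B)` and
`[Γ_[i](B), Γ_[n-i](B)]₊` for `1 ≤ i ≤ n-1`. -/
def gammaAux (B : Type*) [SkewBrace B] : ℕ → Set B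
  | 0 => Set.univ
  | n + 1 => (AddSubgroup.closure (⋃ j : Fin (n + 1),
      {z : B | ∃ x ∈ gammaAux B j.1, ∃ y ∈ gammaAux B (n - j.1),
        z = starOp x y ∨ z = x + y - x - y}) : AddSubgroup B)
  decreasing_by
  · exact j.isLt
  · omega

/-- `Γ_[n](B)` for `n ≥ 1` (one-based indexing as in the paper). -/
def gammaBr (B : Type*) [SkewBrace B] (n : ℕ) : Set B := gammaAux B (n - 1)

/-- `B` is finitely generated as a skew brace: there is a finite subset whose
smallest containing sub skew brace is `B` itself. -/
def SBFinitelyGenerated (B : Type*) [SkewBrace B] : Prop :=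
  ∃ S : Set B, S.Finite ∧ ∀ T : Set B, IsSubSkewBrace T → S ⊆ T → T = Set.univ

/-- `B` satisfies the ascending chain condition on sub skew braces. -/
def ACCSubSkewBrace (B : Type*) [SkewBrace B] : Prop :=
  ∀ f : ℕ → Set B, (∀ n, IsSubSkewBrace (f n)) → (∀ n, f n ⊆ f (n + 1)) →
    ∃ N : ℕ, ∀ n, N ≤ n → f n = f N


section AuxLemmas

variable {B : Type*} [SkewBrace B]


theorem mul_zero' (a : B) : a * (0 : B) = a := by
  have h := SkewBrace.circ_add a 0 0
  rw [add_zero] at h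
  have h2 : (0 : B) + a * 0 = a * 0 - a + a * 0 := by rw [zero_add]; exact h
  have h3 := add_right_cancel h2
  exact (sub_eq_zero.mp h3.symm)

theorem one_eq_zero : (1 : B) = 0 := by
  have h := mul_zero' (1 : B)
  rw [one_mul] at h
  exact h.symm

theorem zero_mul' (a : B) : (0 : B) * a = a := by
  rw [← one_eq_zero, one_mul]

theorem lam_add (a b c : B) : lam a (b + c) = lam a b + lam a c := by
  simp only [lam, SkewBrace.circ_add, sub_eq_add_neg]
  simp [add_assoc]

theorem mul_eq_add_lam (a b : B) : a * b = a + lam a b := by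
  simp [lam, add_neg_cancel_left]

theorem lam_zero (a : B) : lam a (0 : B) = 0 := by simp [lam, mul_zero']

theorem lam_neg (a b : B) : lam a (-b) = -(lam a b) := by
  have h := lam_add a b (-b)
  rw [add_neg_cancel, lam_zero] at h
  exact (neg_eq_of_add_eq_zero_right h.symm).symm

theorem mul_neg' (a b : B) : a * (-b) = a - a * b + a := by
  have h := SkewBrace.circ_add a b (-b)
  rw [add_neg_cancel, mul_zero'] at h
  have h2 : a - a * b = -(a * b - a) := by rw [neg_sub]
  rw [h2, eq_neg_add_iff_add_eq]
  exact h.symm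

theorem lam_mul (a b c : B) : lam (a * b) c = lam a (lam b c) := by
  show -(a*b) + (a*b)*c = -a + a * (lam b c)
  rw [mul_assoc]
  rw [show lam b c = -b + b * c from rfl]
  rw [SkewBrace.circ_add, mul_neg']
  simp [sub_eq_add_neg, add_assoc]

theorem lam_lam_inv (a b : B) : lam a (lam a⁻¹ b) = b := by
  rw [← lam_mul, mul_inv_cancel, one_eq_zero]
  show -(0:B) + 0 * b = b
  rw [zero_mul', neg_zero, zero_add]

theorem lam_inv_lam (a b : B) : lam a⁻¹ (lam a b) = b := by
  rw [← lam_mul, inv_mul_cancel, one_eq_zero]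
  show -(0:B) + 0 * b = b
  rw [zero_mul', neg_zero, zero_add]

theorem lam_eq_star_add (a b : B) : lam a b = starOp a b + b := by
  simp [starOp, lam, sub_eq_add_neg, add_assoc]

theorem mul_eq_star (a b : B) : a * b = a + (starOp a b + b) := by
  rw [mul_eq_add_lam, lam_eq_star_add]

theorem star_zero (a : B) : starOp a 0 = 0 := by simp [starOp, mul_zero']

theorem zero_star (b : B) : starOp 0 b = 0 := by simp [starOp, zero_mul']

theorem star_add_right (a b c : B) : starOp a (b + c) = starOp a b + (b + starOp a c + -b) := by
  have h : lam a (b + c) = lam a b + lam a c := lam_add a b c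
  rw [lam_eq_star_add, lam_eq_star_add, lam_eq_star_add] at h
  have h2 : starOp a (b+c) = starOp a b + b + (starOp a c + c) - (b + c) := eq_sub_of_add_eq h
  rw [h2]
  simp [sub_eq_add_neg, add_assoc]

theorem star_mul_left (a b c : B) : starOp (a * b) c = starOp a (starOp b c) + starOp b c + starOp a c := by
  show lam (a*b) c - c = _
  rw [lam_mul, show lam b c = starOp b c + c from lam_eq_star_add b c, lam_add,
    lam_eq_star_add, lam_eq_star_add]
  simp [sub_eq_add_neg, add_assoc]

theorem inv_eq_neg_star (a : B) : a⁻¹ = -(starOp a a⁻¹) + -a := by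
  have h : a * a⁻¹ = a + (starOp a a⁻¹ + a⁻¹) := mul_eq_star a a⁻¹
  rw [mul_inv_cancel, one_eq_zero] at h
  have h2 : starOp a a⁻¹ + a⁻¹ = -a := (neg_eq_of_add_eq_zero_right h.symm).symm
  rw [← h2]
  simp [← add_assoc]


/-- A set that is a normal, `λ`-invariant additive subgroup (as a subset). -/
def GoodSet (A : Set B) : Prop :=
  (0 : B) ∈ A ∧ (∀ x ∈ A, ∀ y ∈ A, x + y ∈ A) ∧ (∀ x ∈ A, -x ∈ A) ∧
    (∀ g : B, ∀ x ∈ A, g + x - g ∈ A) ∧ (∀ g : B, ∀ x ∈ A, lam g x ∈ A)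

/-- congruence modulo `A`. -/
def Rel (A : Set B) (v w : B) : Prop := v - w ∈ A

section RelLemmas

variable {A : Set B} (hA : GoodSet A)
include hA

theorem rel_refl (v : B) : Rel A v v := by
  show v - v ∈ A; rw [sub_self]; exact hA.1

theorem rel_symm {v w : B} (h : Rel A v w) : Rel A w v := by
  show w - v ∈ A
  have : w - v = -(v - w) := by rw [neg_sub]
  rw [this]; exact hA.2.2.1 _ h

theorem rel_trans {u v w : B} (h1 : Rel A u v) (h2 : Rel A v w) : Rel A u w := by
  show u - w ∈ A
  have : u - w = (u - v) + (v - w) := (sub_add_sub_cancel u v w).symm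
  rw [this]; exact hA.2.1 _ h1 _ h2

theorem rel_of_mem {c : B} (h : c ∈ A) (w : B) : Rel A (c + w) w := by
  show c + w - w ∈ A; rwa [add_sub_cancel_right]

theorem mem_of_rel_zero {z : B} (h : Rel A z 0) : z ∈ A := by
  have : z - 0 ∈ A := h
  rwa [sub_zero] at this

theorem rel_zero_of_mem {z : B} (h : z ∈ A) : Rel A z 0 := by
  show z - 0 ∈ A; rwa [sub_zero]

theorem rel_add {v w v' w' : B} (h : Rel A v w) (h' : Rel A v' w') :
    Rel A (v + v') (w + w') := by
  show v + v' - (w + w') ∈ A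
  have e : v + v' - (w + w') = (v + (v' - w') - v) + (v - w) := by
    simp [sub_eq_add_neg, neg_add_rev, add_assoc]
  rw [e]
  exact hA.2.1 _ (hA.2.2.2.1 v _ h') _ h

theorem rel_neg {v w : B} (h : Rel A v w) : Rel A (-v) (-w) := by
  show -v - -w ∈ A
  have e : -v - -w = -v + (w - v) - -v := by
    simp [sub_eq_add_neg, add_assoc]
  rw [e]
  exact hA.2.2.2.1 (-v) _ (rel_symm hA h)

theorem rel_mul_left (u : B) {v w : B} (h : Rel A v w) : Rel A (u * v) (u * w) := by
  show u * v - u * w ∈ A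
  have e : u * v - u * w = u + lam u (v - w) - u := by
    have l : lam u (v - w) = lam u v - lam u w := by
      rw [sub_eq_add_neg, lam_add, lam_neg, ← sub_eq_add_neg]
    rw [l, mul_eq_add_lam u v, mul_eq_add_lam u w]
    simp [sub_eq_add_neg, neg_add_rev, add_assoc]
  rw [e]
  exact hA.2.2.2.1 u _ (hA.2.2.2.2 u _ h)

end RelLemmas

theorem annSeries_succ_def (k : ℕ) (x : B) :
    x ∈ annSeries B (k+1) ↔ ∀ a : B,
      x * a - a * x ∈ annSeries B k ∧
      x * a - (x + a) ∈ annSeries B k ∧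
      (x + a) - (a + x) ∈ annSeries B k := Iff.rfl

theorem annSeries_mono : ∀ k, annSeries B k ⊆ annSeries B (k+1) := by
  intro k
  induction k with
  | zero =>
    intro x hx
    have hx0 : x = 0 := hx
    subst hx0
    intro a
    refine ⟨?_, ?_, ?_⟩ <;> simp [zero_mul', mul_zero', annSeries]
  | succ n ih =>
    intro x hx a
    exact ⟨ih ((hx a).1), ih ((hx a).2.1), ih ((hx a).2.2)⟩

theorem annSeries_le {k k' : ℕ} (h : k ≤ k') : annSeries B k ⊆ annSeries B k' := by
  induction h with
  | refl => exact fun _ h => h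
  | step _ ih => exact fun x hx => annSeries_mono _ (ih hx)

/-- `z` is "central modulo `annSeries B k`". -/
def NFk (k : ℕ) (z : B) : Prop := ∀ a : B,
  Rel (annSeries B k) (z * a) (z + a) ∧
  Rel (annSeries B k) (a * z) (z + a) ∧
  Rel (annSeries B k) (z + a) (a + z)

theorem mem_succ_iff_NF {k : ℕ} (hA : GoodSet (annSeries B k)) (x : B) :
    x ∈ annSeries B (k+1) ↔ NFk k x := by
  constructor
  · intro h a
    obtain ⟨c1, c2, c3⟩ := h a
    refine ⟨c2, ?_, c3⟩
    · show a * x - (x + a) ∈ annSeries B k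
      have e : a * x - (x + a) = -(x * a - a * x) + (x * a - (x + a)) := by
        simp [sub_eq_add_neg, neg_add_rev, add_assoc]
      rw [e]
      exact hA.2.1 _ (hA.2.2.1 _ c1) _ c2
  · intro h a
    exact ⟨rel_trans hA (h a).1 (rel_symm hA (h a).2.1), (h a).1, (h a).2.2⟩


section NFClosure

variable {k : ℕ} (hA : GoodSet (annSeries B k))
include hA

theorem star_mem_of_NF {x : B} (h : NFk k x) (y : B) : starOp x y ∈ annSeries B k := by
  have r1 : Rel (annSeries B k) (-x + x*y + -y) (-x + (x+y) + -y) :=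
    rel_add hA (rel_add hA (rel_refl hA _) (h y).1) (rel_refl hA _)
  have e1 : starOp x y = -x + x*y + -y := by simp [starOp, sub_eq_add_neg]
  have e2 : -x + (x+y) + -y = (0 : B) := by simp [← add_assoc]
  rw [e2] at r1
  rw [e1]
  exact mem_of_rel_zero hA r1

theorem comm_mem_of_NF {x : B} (h : NFk k x) (a : B) :
    x + a - x - a ∈ annSeries B k := by
  have h3 := (h a).2.2
  have e : x + a - x - a = (x + a) - (a + x) := by
    simp [sub_eq_add_neg, neg_add_rev, add_assoc]
  rw [e]
  exact h3

theorem NF_zero : NFk k (0 : B) := by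
  intro a
  refine ⟨?_, ?_, ?_⟩
  · rw [zero_mul', zero_add]; exact rel_refl hA a
  · rw [mul_zero', zero_add]; exact rel_refl hA a
  · rw [zero_add, add_zero]; exact rel_refl hA a

theorem rel_sub {v w v' w' : B} (h : Rel (annSeries B k) v w) (h' : Rel (annSeries B k) v' w') :
    Rel (annSeries B k) (v - v') (w - w') := by
  rw [sub_eq_add_neg, sub_eq_add_neg]
  exact rel_add hA h (rel_neg hA h')

theorem NF_mul {x y : B} (hx : NFk k x) (hy : NFk k y) : NFk k (x * y) := by
  intro a
  have base : Rel (annSeries B k) (x*y + a) (x + y + a) :=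
    rel_add hA (hx y).1 (rel_refl hA a)
  refine ⟨?_, ?_, ?_⟩
  · have e0 : (x*y)*a = x*(y*a) := mul_assoc x y a
    have r1 : Rel (annSeries B k) (x*(y*a)) (x*(y+a)) := rel_mul_left hA x (hy a).1
    have e2 : x*(y+a) = x*y - x + x*a := SkewBrace.circ_add x y a
    have r2 : Rel (annSeries B k) (x*y - x + x*a) ((x+y) - x + (x+a)) :=
      rel_add hA (rel_sub hA (hx y).1 (rel_refl hA _)) (hx a).1
    have e3 : (x+y) - x + (x+a) = x + y + a := by
      simp [sub_eq_add_neg, add_assoc]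
    have r3 : Rel (annSeries B k) ((x*y)*a) (x+y+a) := by
      rw [e0]
      exact rel_trans hA r1 (by rw [e2, ← e3]; exact r2)
    exact rel_trans hA r3 (rel_symm hA base)
  · have e0 : a*(x*y) = (a*x)*y := (mul_assoc a x y).symm
    have r1 : Rel (annSeries B k) ((a*x)*y) (y + a*x) := (hy (a*x)).2.1
    have r2 : Rel (annSeries B k) (y + a*x) (y + (x+a)) :=
      rel_add hA (rel_refl hA _) (hx a).2.1
    have r3 : Rel (annSeries B k) (y + (x+a)) ((x+y) + a) := by
      have e : y + (x + a) = (y + x) + a := (add_assoc y x a).symm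
      rw [e]
      exact rel_add hA (hy x).2.2 (rel_refl hA _)
    have : Rel (annSeries B k) (a*(x*y)) ((x+y)+a) := by
      rw [e0]; exact rel_trans hA r1 (rel_trans hA r2 r3)
    exact rel_trans hA this (rel_symm hA base)
  · have r1 : Rel (annSeries B k) (x*y + a) (x + (y+a)) := by
      have := base; rwa [add_assoc] at this
    have r2 : Rel (annSeries B k) (x + (y+a)) (x + (a+y)) :=
      rel_add hA (rel_refl hA _) (hy a).2.2
    have r3 : Rel (annSeries B k) (x + (a+y)) ((a+x) + y) := by
      have e : x + (a+y) = (x+a) + y := (add_assoc x a y).symm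
      rw [e]
      exact rel_add hA (hx a).2.2 (rel_refl hA _)
    have r4 : Rel (annSeries B k) ((a+x)+y) (a + x*y) := by
      have e : (a+x)+y = a + (x+y) := add_assoc a x y
      rw [e]
      exact rel_add hA (rel_refl hA _) (rel_symm hA (hx y).1)
    exact rel_trans hA r1 (rel_trans hA r2 (rel_trans hA r3 r4))

theorem rel_inv_neg {x : B} (hx : NFk k x) : Rel (annSeries B k) x⁻¹ (-x) := by
  have h0 : Rel (annSeries B k) (x * x⁻¹) (x + x⁻¹) := (hx x⁻¹).1
  rw [mul_inv_cancel, one_eq_zero] at h0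
  have h1 : Rel (annSeries B k) (-x + 0) (-x + (x + x⁻¹)) :=
    rel_add hA (rel_refl hA _) h0
  rw [add_zero, neg_add_cancel_left] at h1
  exact rel_symm hA h1

theorem NF_inv {x : B} (hx : NFk k x) : NFk k x⁻¹ := by
  have hinv := rel_inv_neg hA hx
  intro a
  have hmain : ∀ t : B, Rel (annSeries B k) a (x + t) → Rel (annSeries B k) t (x⁻¹ + a) := by
    intro t ht
    have h1 : Rel (annSeries B k) (-x + a) (-x + (x + t)) := rel_add hA (rel_refl hA _) ht
    rw [neg_add_cancel_left] at h1
    have h2 : Rel (annSeries B k) (x⁻¹ + a) (-x + a) := rel_add hA hinv (rel_refl hA _)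
    exact rel_symm hA (rel_trans hA h2 h1)
  refine ⟨?_, ?_, ?_⟩
  · have h := (hx (x⁻¹ * a)).1
    rw [← mul_assoc, mul_inv_cancel, one_eq_zero, zero_mul'] at h
    exact hmain _ h
  · have h := (hx (a * x⁻¹)).2.1
    rw [mul_assoc, inv_mul_cancel, one_eq_zero, mul_zero'] at h
    exact hmain _ h
  · have c := (hx a).2.2
    have h1 : Rel (annSeries B k) (-x + (x + a)) (-x + (a + x)) :=
      rel_add hA (rel_refl hA _) c
    rw [neg_add_cancel_left] at h1
    have h2' := rel_add hA h1 (rel_refl hA (-x))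
    have e2 : (-x + (a + x)) + -x = -x + a := by simp [add_assoc]
    rw [e2] at h2'
    -- h2' : Rel (a + -x) (-x + a)
    have l : Rel (annSeries B k) (x⁻¹ + a) (-x + a) := rel_add hA hinv (rel_refl hA _)
    have r : Rel (annSeries B k) (a + x⁻¹) (a + -x) := rel_add hA (rel_refl hA _) hinv
    exact rel_trans hA l (rel_trans hA (rel_symm hA h2') (rel_symm hA r))

theorem NF_of_mem {c : B} (hc : c ∈ annSeries B k) : NFk k c :=
  (mem_succ_iff_NF hA c).1 (annSeries_mono k hc)

theorem NF_right_translate {x c : B} (hx : NFk k x) (hc : c ∈ annSeries B k) :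
    NFk k (x + c) := by
  have hc' : lam x⁻¹ c ∈ annSeries B k := hA.2.2.2.2 x⁻¹ c hc
  have e : x * (lam x⁻¹ c) = x + c := by rw [mul_eq_add_lam, lam_lam_inv]
  have h := NF_mul hA hx (NF_of_mem hA hc')
  rwa [e] at h

theorem NF_left_translate {c y : B} (hc : c ∈ annSeries B k) (hy : NFk k y) :
    NFk k (c + y) := by
  have hm : -y + c + y ∈ annSeries B k := by
    have h := hA.2.2.2.1 (-y) c hc
    rwa [sub_neg_eq_add] at h
  have e : c + y = y + (-y + c + y) := by simp [← add_assoc]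
  rw [e]
  exact NF_right_translate hA hy hm

theorem NF_add {x y : B} (hx : NFk k x) (hy : NFk k y) : NFk k (x + y) := by
  have hs : starOp x⁻¹ y ∈ annSeries B k := star_mem_of_NF hA (NF_inv hA hx) y
  have h2 : NFk k (lam x⁻¹ y) := by
    rw [lam_eq_star_add]
    exact NF_left_translate hA hs hy
  have e2 : x * (lam x⁻¹ y) = x + y := by rw [mul_eq_add_lam, lam_lam_inv]
  have h := NF_mul hA hx h2
  rwa [e2] at h

theorem NF_neg {x : B} (hx : NFk k x) : NFk k (-x) := by
  have hc : x⁻¹ + x ∈ annSeries B k := by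
    have h : x⁻¹ - -x ∈ annSeries B k := rel_inv_neg hA hx
    rwa [sub_neg_eq_add] at h
  have e : -x = -(x⁻¹ + x) + x⁻¹ := by simp [neg_add_rev, add_assoc]
  rw [e]
  exact NF_left_translate hA (hA.2.2.1 _ hc) (NF_inv hA hx)

theorem NF_conj {x : B} (hx : NFk k x) (g : B) : NFk k (g + x - g) := by
  have hc : g + x - g - x ∈ annSeries B k := by
    have h1 : (x + g) - (g + x) ∈ annSeries B k := (hx g).2.2
    have h2 := hA.2.2.1 _ h1
    rw [neg_sub] at h2
    have e : g + x - g - x = (g + x) - (x + g) := by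
      simp [sub_eq_add_neg, neg_add_rev, add_assoc]
    rwa [e]
  have e2 : g + x - g = (g + x - g - x) + x := by
    simp [sub_eq_add_neg, add_assoc]
  rw [e2]
  exact NF_left_translate hA hc hx

theorem NF_lam {x : B} (hx : NFk k x) (g : B) : NFk k (lam g x) := by
  have hd : g * x - (x + g) ∈ annSeries B k := (hx g).2.1
  set d := g * x - (x + g) with hddef
  have hgx : g * x = d + (x + g) := by rw [hddef, sub_add_cancel]
  have e : lam g x = (-g + d + g) + (-g + x + g) := by
    show -g + g * x = _
    rw [hgx]
    simp [add_assoc]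
  have h1 : -g + d + g ∈ annSeries B k := by
    have h := hA.2.2.2.1 (-g) d hd
    rwa [sub_neg_eq_add] at h
  have h2 : NFk k (-g + x + g) := by
    have h := NF_conj hA hx (-g)
    rwa [sub_neg_eq_add] at h
  rw [e]
  exact NF_left_translate hA h1 h2

end NFClosure

theorem annSeries_good (B : Type*) [SkewBrace B] : ∀ k, GoodSet (annSeries B k) := by
  intro k
  induction k with
  | zero =>
    refine ⟨rfl, ?_, ?_, ?_, ?_⟩
    · intro x hx y hy
      have hx0 : x = 0 := hx
      have hy0 : y = 0 := hy
      simp [hx0, hy0, annSeries]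
    · intro x hx
      have hx0 : x = 0 := hx
      simp [hx0, annSeries]
    · intro g x hx
      have hx0 : x = 0 := hx
      simp [hx0, annSeries]
    · intro g x hx
      have hx0 : x = 0 := hx
      simp [hx0, lam_zero, annSeries]
  | succ n ih =>
    refine ⟨?_, ?_, ?_, ?_, ?_⟩
    · exact (mem_succ_iff_NF ih 0).2 (NF_zero ih)
    · intro x hx y hy
      exact (mem_succ_iff_NF ih _).2
        (NF_add ih ((mem_succ_iff_NF ih x).1 hx) ((mem_succ_iff_NF ih y).1 hy))
    · intro x hx
      exact (mem_succ_iff_NF ih _).2 (NF_neg ih ((mem_succ_iff_NF ih x).1 hx))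
    · intro g x hx
      exact (mem_succ_iff_NF ih _).2 (NF_conj ih ((mem_succ_iff_NF ih x).1 hx) g)
    · intro g x hx
      exact (mem_succ_iff_NF ih _).2 (NF_lam ih ((mem_succ_iff_NF ih x).1 hx) g)

theorem star_into {k : ℕ} {x : B} (hx : x ∈ annSeries B (k+1)) (y : B) :
    starOp x y ∈ annSeries B k :=
  star_mem_of_NF (annSeries_good B k) ((mem_succ_iff_NF (annSeries_good B k) x).1 hx) y

theorem comm_into {k : ℕ} {x : B} (hx : x ∈ annSeries B (k+1)) (y : B) :
    x + y - x - y ∈ annSeries B k :=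
  comm_mem_of_NF (annSeries_good B k) ((mem_succ_iff_NF (annSeries_good B k) x).1 hx) y

/-- `annSeries B k` as an additive subgroup. -/
def annSub (B : Type*) [SkewBrace B] (k : ℕ) : AddSubgroup B where
  carrier := annSeries B k
  zero_mem' := (annSeries_good B k).1
  add_mem' := fun {a b} ha hb => (annSeries_good B k).2.1 a ha b hb
  neg_mem' := fun {a} ha => (annSeries_good B k).2.2.1 a ha

theorem mem_annSub {k : ℕ} {x : B} : x ∈ annSub B k ↔ x ∈ annSeries B k := Iff.rfl


/-- the generating set used in `gammaAux (n+1)`. -/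
def gammaGen (B : Type*) [SkewBrace B] (n : ℕ) : Set B :=
  ⋃ j : Fin (n + 1), {z : B | ∃ x ∈ gammaAux B j.1, ∃ y ∈ gammaAux B (n - j.1),
    z = starOp x y ∨ z = x + y - x - y}

theorem gammaAux_zero : gammaAux B 0 = Set.univ := by rw [gammaAux]

theorem gammaAux_succ (n : ℕ) :
    gammaAux B (n + 1) = ↑(AddSubgroup.closure (gammaGen B n)) := by
  rw [gammaAux]; rfl

/-- `gammaAux` as an additive subgroup. -/
def gammaSub (B : Type*) [SkewBrace B] : ℕ → AddSubgroup B
  | 0 => ⊤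
  | n + 1 => AddSubgroup.closure (gammaGen B n)

theorem gammaSub_coe (m : ℕ) : (gammaSub B m : Set B) = gammaAux B m := by
  cases m with
  | zero => rw [gammaAux_zero]; rfl
  | succ n => rw [gammaAux_succ]; rfl

theorem mem_gammaSub {m : ℕ} {x : B} : x ∈ gammaSub B m ↔ x ∈ gammaAux B m := by
  rw [← gammaSub_coe]; rfl

theorem gamma_zero_mem (m : ℕ) : (0 : B) ∈ gammaAux B m :=
  mem_gammaSub.1 (gammaSub B m).zero_mem

theorem gamma_add {m : ℕ} {x y : B} (hx : x ∈ gammaAux B m) (hy : y ∈ gammaAux B m) :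
    x + y ∈ gammaAux B m :=
  mem_gammaSub.1 ((gammaSub B m).add_mem (mem_gammaSub.2 hx) (mem_gammaSub.2 hy))

theorem gamma_neg {m : ℕ} {x : B} (hx : x ∈ gammaAux B m) : -x ∈ gammaAux B m :=
  mem_gammaSub.1 ((gammaSub B m).neg_mem (mem_gammaSub.2 hx))

theorem star_mem_gamma {p q : ℕ} {x y : B} (hx : x ∈ gammaAux B p) (hy : y ∈ gammaAux B q) :
    starOp x y ∈ gammaAux B (p + q + 1) := by
  rw [gammaAux_succ]
  apply AddSubgroup.subset_closure
  refine Set.mem_iUnion.2 ⟨⟨p, by omega⟩, ?_⟩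
  refine ⟨x, hx, y, ?_, Or.inl rfl⟩
  show y ∈ gammaAux B (p + q - p)
  rwa [Nat.add_sub_cancel_left]

theorem comm_mem_gamma {p q : ℕ} {x y : B} (hx : x ∈ gammaAux B p) (hy : y ∈ gammaAux B q) :
    x + y - x - y ∈ gammaAux B (p + q + 1) := by
  rw [gammaAux_succ]
  apply AddSubgroup.subset_closure
  refine Set.mem_iUnion.2 ⟨⟨p, by omega⟩, ?_⟩
  refine ⟨x, hx, y, ?_, Or.inr rfl⟩
  show y ∈ gammaAux B (p + q - p)
  rwa [Nat.add_sub_cancel_left]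

theorem gamma_antitone : ∀ n : ℕ, gammaAux B (n + 1) ⊆ gammaAux B n := by
  intro n
  induction n using Nat.strong_induction_on with
  | _ n ih =>
    cases n with
    | zero => rw [gammaAux_zero]; exact fun x _ => Set.mem_univ x
    | succ m =>
      rw [gammaAux_succ (m+1), gammaAux_succ m]
      intro z hz
      refine (AddSubgroup.closure_le (AddSubgroup.closure (gammaGen B m))).2 ?_ hz
      intro w hw
      obtain ⟨j, x, hx, y, hy, hw⟩ := Set.mem_iUnion.1 hw
      have hjlt : j.1 < m + 2 := j.isLt
      by_cases hj : j.1 ≤ m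
      · have hy' : y ∈ gammaAux B ((m - j.1) + 1) := by
          have e : (m + 1) - j.1 = (m - j.1) + 1 := by omega
          rwa [e] at hy
        have hy'' : y ∈ gammaAux B (m - j.1) := ih (m - j.1) (by omega) hy'
        have e2 : j.1 + (m - j.1) + 1 = m + 1 := by omega
        rcases hw with rfl | rfl
        · have h := star_mem_gamma hx hy''
          rw [e2, gammaAux_succ] at h
          exact h
        · have h := comm_mem_gamma hx hy''
          rw [e2, gammaAux_succ] at h
          exact h
      · have hjm : j.1 = m + 1 := by omega
        have hx' : x ∈ gammaAux B (m + 1) := by rwa [hjm] at hx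
        have hx'' : x ∈ gammaAux B m := ih m (by omega) hx'
        have hy0 : y ∈ gammaAux B 0 := by rw [gammaAux_zero]; trivial
        rcases hw with rfl | rfl
        · have h := star_mem_gamma hx'' hy0
          rw [show m + 0 + 1 = m + 1 from rfl, gammaAux_succ] at h
          exact h
        · have h := comm_mem_gamma hx'' hy0
          rw [show m + 0 + 1 = m + 1 from rfl, gammaAux_succ] at h
          exact h

theorem gamma_le {m m' : ℕ} (h : m ≤ m') : gammaAux B m' ⊆ gammaAux B m := by
  induction h with
  | refl => exact fun _ h => h
  | step _ ih => exact fun x hx => ih (gamma_antitone _ hx)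

theorem gamma_conj {m : ℕ} {x : B} (hx : x ∈ gammaAux B m) (a : B) :
    a + x - a ∈ gammaAux B m := by
  have hcomm : a + x - a - x ∈ gammaAux B (0 + m + 1) :=
    comm_mem_gamma (by rw [gammaAux_zero]; trivial) hx
  have hcomm' : a + x - a - x ∈ gammaAux B m := by
    refine gamma_le (by omega) hcomm
  have e : a + x - a = (a + x - a - x) + x := by simp [sub_eq_add_neg, add_assoc]
  rw [e]
  exact gamma_add hcomm' hx

theorem gamma_lam {m : ℕ} {x : B} (hx : x ∈ gammaAux B m) (a : B) :
    lam a x ∈ gammaAux B m := by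
  have hs : starOp a x ∈ gammaAux B (0 + m + 1) :=
    star_mem_gamma (by rw [gammaAux_zero]; trivial) hx
  have hs' : starOp a x ∈ gammaAux B m := gamma_le (by omega) hs
  rw [lam_eq_star_add]
  exact gamma_add hs' hx

theorem mem_of_rel_mem {A : Set B} (hA : GoodSet A) {z t : B} (h : Rel A z t) (ht : t ∈ A) :
    z ∈ A := by
  have e : z = (z - t) + t := by rw [sub_add_cancel]
  rw [e]
  exact hA.2.1 _ h _ ht

theorem star_into_right {k : ℕ} {y : B} (hy : y ∈ annSeries B (k+1)) (x : B) :
    starOp x y ∈ annSeries B k := by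
  have hA := annSeries_good B k
  have hNF : NFk k y := (mem_succ_iff_NF hA y).1 hy
  have r : Rel (annSeries B k) (x * y) (y + x) := (hNF x).2.1
  have r1 : Rel (annSeries B k) (-x + x*y + -y) (-x + (y+x) + -y) :=
    rel_add hA (rel_add hA (rel_refl hA _) r) (rel_refl hA _)
  have e1 : starOp x y = -x + x*y + -y := by simp [starOp, sub_eq_add_neg]
  have hc : y + x - y - x ∈ annSeries B k := comm_mem_of_NF hA hNF x
  have ht : -x + (y+x) + -y ∈ annSeries B k := by
    have e2 : -x + (y+x) + -y = -x + (y + x - y - x) + x := by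
      simp [sub_eq_add_neg, add_assoc]
    rw [e2]
    have h := hA.2.2.2.1 (-x) _ hc
    rwa [sub_neg_eq_add] at h
  rw [e1]
  exact mem_of_rel_mem hA r1 ht

theorem comm_into_right {k : ℕ} {y : B} (hy : y ∈ annSeries B (k+1)) (x : B) :
    x + y - x - y ∈ annSeries B k := by
  have hA := annSeries_good B k
  have hNF : NFk k y := (mem_succ_iff_NF hA y).1 hy
  have hc : y + x - y - x ∈ annSeries B k := comm_mem_of_NF hA hNF x
  have e : x + y - x - y = -(y + x - y - x) := by
    simp [sub_eq_add_neg, neg_add_rev, add_assoc]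
  rw [e]
  exact hA.2.2.1 _ hc

theorem gamma_absorb {n₀ : ℕ} (hann0 : annSeries B n₀ = Set.univ) :
    ∀ s, s ≤ n₀ → ∀ m, 2^s - 1 ≤ m → gammaAux B m ⊆ annSeries B (n₀ - s) := by
  intro s
  induction s with
  | zero =>
    intro _ m _
    rw [Nat.sub_zero, hann0]
    exact fun x _ => trivial
  | succ s ih =>
    intro hs m hm
    have hp : 1 ≤ 2^s := Nat.one_le_two_pow
    have h2 : 2^(s+1) = 2^s + 2^s := by rw [pow_succ, Nat.mul_two]
    cases m with
    | zero => omega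
    | succ n =>
      rw [gammaAux_succ]
      intro z hz
      refine (AddSubgroup.closure_le (annSub B (n₀ - (s+1)))).2 ?_ hz
      intro w hw
      obtain ⟨j, x, hx, y, hy, hw⟩ := Set.mem_iUnion.1 hw
      have hj : j.1 < n+1 := j.isLt
      have hksucc : n₀ - s = (n₀ - (s+1)) + 1 := by omega
      have hsplit : 2^s - 1 ≤ j.1 ∨ 2^s - 1 ≤ n - j.1 := by omega
      rcases hsplit with hbig | hbig
      · have hxA : x ∈ annSeries B (n₀ - s) := ih (by omega) j.1 hbig hx
        rw [hksucc] at hxA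
        rcases hw with rfl | rfl
        · exact star_into hxA y
        · exact comm_into hxA y
      · have hyA : y ∈ annSeries B (n₀ - s) := ih (by omega) (n - j.1) hbig hy
        rw [hksucc] at hyA
        rcases hw with rfl | rfl
        · exact star_into_right hyA x
        · exact comm_into_right hyA x

theorem gamma_triv {n₀ : ℕ} (hann0 : annSeries B n₀ = Set.univ) :
    gammaAux B (2^n₀ - 1) ⊆ ({0} : Set B) := by
  have h := gamma_absorb hann0 n₀ le_rfl (2^n₀ - 1) le_rfl
  rwa [Nat.sub_self] at h


theorem comm_add_right (w y y' : B) :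
    w + (y + y') - w - (y + y') = (w + y - w - y) + (y + (w + y' - w - y') + -y) := by
  simp [sub_eq_add_neg, neg_add_rev, ← add_assoc]

theorem comm_add_left (x x' y : B) :
    (x + x') + y - (x + x') - y = x + (x' + y - x' - y) + -x + (x + y - x - y) := by
  simp [sub_eq_add_neg, neg_add_rev, ← add_assoc]

theorem gamma_zero_univ (x : B) : x ∈ gammaAux B 0 := by
  rw [gammaAux_zero]; trivial

theorem fgp (S : Set B) (hSfin : S.Finite)
    (hSgen : ∀ T : Set B, IsSubSkewBrace T → S ⊆ T → T = Set.univ) :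
    ∀ m : ℕ, ∃ W : Set B, W.Finite ∧ W ⊆ gammaAux B m ∧
      gammaAux B m ⊆ ↑(AddSubgroup.closure (W ∪ gammaAux B (m+1))) := by
  intro m
  induction m using Nat.strong_induction_on with
  | _ m ih =>
    cases m with
    | zero =>
      refine ⟨S, hSfin, fun x _ => gamma_zero_univ x, ?_⟩
      have hT : IsSubSkewBrace (↑(AddSubgroup.closure (S ∪ gammaAux B 1)) : Set B) := by
        set T := AddSubgroup.closure (S ∪ gammaAux B (0+1)) with hTdef
        have hG1 : gammaAux B 1 ⊆ ↑T := fun z hz => AddSubgroup.subset_closure (Or.inr hz)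
        refine ⟨T.zero_mem, fun a ha b hb => T.add_mem ha hb, fun a ha => T.neg_mem ha,
          ?_, ?_⟩
        · intro a ha b hb
          have hs : starOp a b ∈ gammaAux B 1 :=
            star_mem_gamma (gamma_zero_univ a) (gamma_zero_univ b)
          rw [mul_eq_star]
          exact T.add_mem ha (T.add_mem (hG1 hs) hb)
        · intro a ha
          have hs : starOp a a⁻¹ ∈ gammaAux B 1 :=
            star_mem_gamma (gamma_zero_univ a) (gamma_zero_univ a⁻¹)
          rw [inv_eq_neg_star]
          exact T.add_mem (T.neg_mem (hG1 hs)) (T.neg_mem ha)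
      have := hSgen _ hT (fun s hs => AddSubgroup.subset_closure (Or.inl hs))
      intro x _
      show x ∈ (↑(AddSubgroup.closure (S ∪ gammaAux B 1)) : Set B)
      rw [this]
      trivial
    | succ n =>
      -- choose the finite sets for all lower levels
      have hWex : ∀ j : ℕ, ∃ W : Set B, W.Finite ∧ W ⊆ gammaAux B j ∧
          (j < n + 1 → gammaAux B j ⊆ ↑(AddSubgroup.closure (W ∪ gammaAux B (j+1)))) := by
        intro j
        by_cases hj : j < n + 1
        · obtain ⟨W, h1, h2, h3⟩ := ih j hj
          exact ⟨W, h1, h2, fun _ => h3⟩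
        · exact ⟨∅, Set.finite_empty, Set.empty_subset _, fun h => absurd h hj⟩
      choose W hWfin hWsub hWspan using hWex
      have hWeq : ∀ p, p < n + 1 →
          gammaAux B p = ↑(AddSubgroup.closure (W p ∪ gammaAux B (p+1))) := by
        intro p hp
        apply Set.Subset.antisymm (hWspan p hp)
        have hle : AddSubgroup.closure (W p ∪ gammaAux B (p+1)) ≤ gammaSub B p := by
          rw [AddSubgroup.closure_le, gammaSub_coe]
          exact Set.union_subset (hWsub p) (gamma_antitone p)
        intro z hz
        exact mem_gammaSub.1 (hle hz)
      set Wnew : Set B := ⋃ j ∈ Finset.range (n+1),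
        (Set.image2 starOp (W j) (W (n - j)) ∪
         Set.image2 (fun a b => a + b - a - b) (W j) (W (n - j))) with hWnewdef
      have hfin : Wnew.Finite := by
        apply Set.Finite.biUnion (Finset.range (n+1)).finite_toSet
        intro j _
        exact (Set.Finite.image2 _ (hWfin j) (hWfin (n-j))).union
          (Set.Finite.image2 _ (hWfin j) (hWfin (n-j)))
      have hsub : Wnew ⊆ gammaAux B (n+1) := by
        intro z hz
        simp only [hWnewdef, Set.mem_iUnion, Finset.mem_coe, Finset.mem_range] at hz
        obtain ⟨j, hj, hz⟩ := hz
        rcases hz with hz | hz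
        · obtain ⟨a, ha, b, hb, rfl⟩ := hz
          have h := star_mem_gamma (hWsub j ha) (hWsub (n-j) hb)
          rwa [show j + (n - j) + 1 = n + 1 by omega] at h
        · obtain ⟨a, ha, b, hb, rfl⟩ := hz
          have h := comm_mem_gamma (hWsub j ha) (hWsub (n-j) hb)
          rwa [show j + (n - j) + 1 = n + 1 by omega] at h
      set D := AddSubgroup.closure (Wnew ∪ gammaAux B (n+1+1)) with hDdef
      have hDgam : ∀ {z : B}, z ∈ gammaAux B (n+2) → z ∈ D :=
        fun hz => AddSubgroup.subset_closure (Or.inr hz)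
      have hDW : ∀ {z : B}, z ∈ Wnew → z ∈ D :=
        fun hz => AddSubgroup.subset_closure (Or.inl hz)
      -- conjugation keeps membership in D for deep elements
      have conjD : ∀ s ∈ D, s ∈ gammaAux B (n+1) → ∀ y : B, y + s + -y ∈ D := by
        intro s hsD hsG y
        have hc := comm_mem_gamma (gamma_neg hsG) (gamma_zero_univ y)
        have hc' : -s + y + s - y ∈ gammaAux B (n+2) := by
          rw [sub_neg_eq_add] at hc
          exact hc
        have e2 : y + s + -y = s + (-s + y + s - y) := by
          simp [sub_eq_add_neg, ← add_assoc]
        rw [e2]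
        exact D.add_mem hsD (hDgam hc')
      -- step 1 : stars and commutators of generators with arbitrary second argument
      have step1 : ∀ p q, p + q = n → ∀ w ∈ W p, ∀ y ∈ gammaAux B q,
          starOp w y ∈ D ∧ w + y - w - y ∈ D := by
        intro p q hpq w hw y hy
        have hq : q < n + 1 := by omega
        have hwp : w ∈ gammaAux B p := hWsub p hw
        have hy' : y ∈ AddSubgroup.closure (W q ∪ gammaAux B (q+1)) := by
          have := (hWeq q hq) ▸ hy
          exact this
        have solveD : ∀ s z y : B, s ∈ D → s ∈ gammaAux B (n+1) →
            (0 : B) = s + (y + z + -y) → z ∈ D := by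
          intro s z y hsD hsG h0
          have h1 : y + z + -y = -s := (neg_eq_of_add_eq_zero_right h0.symm).symm
          have e : z = -y + -s + y := by rw [← h1]; simp [← add_assoc]
          have hcs : s + -y - s + y ∈ gammaAux B (n+2) := by
            have h := comm_mem_gamma hsG (gamma_zero_univ (-y))
            rwa [sub_neg_eq_add] at h
          have e3 : -y + -s + y = -s + (s + -y - s + y) := by
            simp [sub_eq_add_neg, ← add_assoc]
          rw [e, e3]
          exact D.add_mem (D.neg_mem hsD) (hDgam hcs)
        have key := AddSubgroup.closure_induction
          (p := fun t (_ : t ∈ AddSubgroup.closure (W q ∪ gammaAux B (q+1))) =>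
            t ∈ gammaAux B q ∧ starOp w t ∈ D ∧ w + t - w - t ∈ D)
          (fun t ht => by
            rcases ht with ht | ht
            · refine ⟨hWsub q ht, ?_, ?_⟩
              · apply hDW
                simp only [hWnewdef, Set.mem_iUnion, Finset.mem_coe, Finset.mem_range]
                exact ⟨p, by omega, Or.inl (Set.mem_image2_of_mem hw
                  (by rwa [show n - p = q by omega]))⟩
              · apply hDW
                simp only [hWnewdef, Set.mem_iUnion, Finset.mem_coe, Finset.mem_range]
                exact ⟨p, by omega, Or.inr (Set.mem_image2_of_mem hw
                  (by rwa [show n - p = q by omega]))⟩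
            · refine ⟨gamma_antitone q ht, ?_, ?_⟩
              · have h := star_mem_gamma hwp ht
                rw [show p + (q+1) + 1 = n + 2 by omega] at h
                exact hDgam h
              · have h := comm_mem_gamma hwp ht
                rw [show p + (q+1) + 1 = n + 2 by omega] at h
                exact hDgam h)
          (⟨gamma_zero_mem q, by rw [star_zero]; exact D.zero_mem, by
            have e : w + 0 - w - 0 = (0:B) := by simp
            rw [e]; exact D.zero_mem⟩)
          (fun y y' _ _ hyp hyp' => by
            obtain ⟨hyq, hsy, hcy⟩ := hyp
            obtain ⟨hy'q, hsy', hcy'⟩ := hyp'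
            refine ⟨gamma_add hyq hy'q, ?_, ?_⟩
            · have hs' : starOp w y' ∈ gammaAux B (n+1) := by
                have h := star_mem_gamma hwp hy'q
                rwa [show p + q + 1 = n + 1 by omega] at h
              rw [star_add_right]
              exact D.add_mem hsy (conjD _ hsy' hs' y)
            · have hc' : w + y' - w - y' ∈ gammaAux B (n+1) := by
                have h := comm_mem_gamma hwp hy'q
                rwa [show p + q + 1 = n + 1 by omega] at h
              rw [comm_add_right]
              exact D.add_mem hcy (conjD _ hcy' hc' y))
          (fun y _ hyp => by
            obtain ⟨hyq, hsy, hcy⟩ := hyp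
            refine ⟨gamma_neg hyq, ?_, ?_⟩
            · have hs : starOp w y ∈ gammaAux B (n+1) := by
                have h := star_mem_gamma hwp hyq
                rwa [show p + q + 1 = n + 1 by omega] at h
              have h0 := star_add_right w y (-y)
              rw [add_neg_cancel, star_zero] at h0
              exact solveD _ _ _ hsy hs h0
            · have hc : w + y - w - y ∈ gammaAux B (n+1) := by
                have h := comm_mem_gamma hwp hyq
                rwa [show p + q + 1 = n + 1 by omega] at h
              have h0 := comm_add_right w y (-y)
              rw [add_neg_cancel, add_zero, sub_zero, sub_self] at h0
              exact solveD _ _ _ hcy hc h0)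
          hy'
        exact ⟨key.2.1, key.2.2⟩
      -- main claim
      have main : ∀ p q, p + q = n → ∀ x ∈ gammaAux B p, ∀ y ∈ gammaAux B q,
          starOp x y ∈ D ∧ x + y - x - y ∈ D := by
        intro p q hpq x hx y hyq
        have hp : p < n + 1 := by omega
        have hx' : x ∈ AddSubgroup.closure (W p ∪ gammaAux B (p+1)) := by
          have := (hWeq p hp) ▸ hx
          exact this
        -- key equation for stars of sums
        have keyStar : ∀ x x' : B, x ∈ gammaAux B p → x' ∈ gammaAux B p →
            ∃ g1 g2 g3 : B, g1 ∈ D ∧ g2 ∈ D ∧ g3 ∈ D ∧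
              starOp (x + x') y = g1 + g2 + (g3 + starOp x' y + starOp x y) := by
          intro x x' hxp hx'p
          have hsG : starOp x x' ∈ gammaAux B (p+1) := star_mem_gamma hxp (gamma_zero_univ x')
          have hcG : -x' + -(starOp x x') + x' ∈ gammaAux B (p+1) := by
            have h := gamma_conj (gamma_neg hsG) (-x')
            rwa [sub_neg_eq_add] at h
          set c' := lam (x * x')⁻¹ (-x' + -(starOp x x') + x') with hc'def
          have hc'G : c' ∈ gammaAux B (p+1) := gamma_lam hcG (x * x')⁻¹
          have e2 : (x * x') * c' = x + x' := by
            rw [hc'def, mul_eq_add_lam, lam_lam_inv, mul_eq_star x x']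
            simp [← add_assoc]
          have h1G : starOp c' y ∈ gammaAux B (n+2) := by
            have h := star_mem_gamma hc'G hyq
            rwa [show (p+1) + q + 1 = n + 2 by omega] at h
          have h2G : starOp (x * x') (starOp c' y) ∈ gammaAux B (n+2) := by
            have h := star_mem_gamma (gamma_zero_univ (x * x')) h1G
            exact gamma_le (by omega) h
          have h3G : starOp x (starOp x' y) ∈ gammaAux B (n+2) := by
            have hxy' : starOp x' y ∈ gammaAux B (n+1) := by
              have h := star_mem_gamma hx'p hyq
              rwa [show p + q + 1 = n + 1 by omega] at h
            have h := star_mem_gamma hxp hxy'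
            exact gamma_le (by omega) h
          refine ⟨starOp (x * x') (starOp c' y), starOp c' y, starOp x (starOp x' y),
            hDgam h2G, hDgam h1G, hDgam h3G, ?_⟩
          rw [← e2, star_mul_left (x*x') c' y, star_mul_left x x' y]
        have key := AddSubgroup.closure_induction
          (p := fun t (_ : t ∈ AddSubgroup.closure (W p ∪ gammaAux B (p+1))) =>
            t ∈ gammaAux B p ∧ starOp t y ∈ D ∧ t + y - t - y ∈ D)
          (fun t ht => by
            rcases ht with ht | ht
            · exact ⟨hWsub p ht, (step1 p q hpq t ht y hyq).1, (step1 p q hpq t ht y hyq).2⟩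
            · refine ⟨gamma_antitone p ht, ?_, ?_⟩
              · have h := star_mem_gamma ht hyq
                rw [show (p+1) + q + 1 = n + 2 by omega] at h
                exact hDgam h
              · have h := comm_mem_gamma ht hyq
                rw [show (p+1) + q + 1 = n + 2 by omega] at h
                exact hDgam h)
          (⟨gamma_zero_mem p, by rw [zero_star]; exact D.zero_mem, by
            have e : (0:B) + y - 0 - y = (0:B) := by simp
            rw [e]; exact D.zero_mem⟩)
          (fun x x' _ _ hyp hyp' => by
            obtain ⟨hxp, hsx, hcx⟩ := hyp
            obtain ⟨hx'p, hsx', hcx'⟩ := hyp'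
            refine ⟨gamma_add hxp hx'p, ?_, ?_⟩
            · obtain ⟨g1, g2, g3, h1, h2, h3, he⟩ := keyStar x x' hxp hx'p
              rw [he]
              exact D.add_mem (D.add_mem h1 h2) (D.add_mem (D.add_mem h3 hsx') hsx)
            · have hz : x' + y - x' - y ∈ gammaAux B (n+1) := by
                have h := comm_mem_gamma hx'p hyq
                rwa [show p + q + 1 = n + 1 by omega] at h
              rw [comm_add_left]
              exact D.add_mem (conjD _ hcx' hz x) hcx)
          (fun x _ hyp => by
            obtain ⟨hxp, hsx, hcx⟩ := hyp
            refine ⟨gamma_neg hxp, ?_, ?_⟩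
            · obtain ⟨g1, g2, g3, h1, h2, h3, he⟩ := keyStar x (-x) hxp (gamma_neg hxp)
              rw [add_neg_cancel, zero_star] at he
              -- he : 0 = g1 + g2 + (g3 + starOp (-x) y + starOp x y)
              have h4 : g3 + starOp (-x) y + starOp x y = -(g1 + g2) :=
                (neg_eq_of_add_eq_zero_right he.symm).symm
              have e : starOp (-x) y = -g3 + -(g1 + g2) + -(starOp x y) := by
                rw [← h4]; simp [← add_assoc]
              rw [e]
              exact D.add_mem (D.add_mem (D.neg_mem h3)
                (D.neg_mem (D.add_mem h1 h2))) (D.neg_mem hsx)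
            · have hwG : x + y - x - y ∈ gammaAux B (n+1) := by
                have h := comm_mem_gamma hxp hyq
                rwa [show p + q + 1 = n + 1 by omega] at h
              have h0 := comm_add_left x (-x) y
              rw [add_neg_cancel, zero_add, sub_zero, sub_self] at h0
              have h4 : x + (-x + y - -x - y) + -x = -(x + y - x - y) :=
                eq_neg_of_add_eq_zero_left h0.symm
              have e2 : -x + y - -x - y = -x + -(x + y - x - y) + x := by
                rw [← h4]; simp [← add_assoc]
              rw [e2]
              have hconj := conjD (-(x + y - x - y)) (D.neg_mem hcx) (gamma_neg hwG) (-x)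
              rwa [neg_neg] at hconj)
          hx'
        exact ⟨key.2.1, key.2.2⟩
      refine ⟨Wnew, hfin, hsub, ?_⟩
      rw [gammaAux_succ n]
      intro z hz
      have hle : AddSubgroup.closure (gammaGen B n) ≤ D := by
        rw [AddSubgroup.closure_le]
        intro w hw
        obtain ⟨j, x, hx, y, hy, hw⟩ := Set.mem_iUnion.1 hw
        have h := main j.1 (n - j.1) (by have := j.isLt; omega) x hx y hy
        rcases hw with rfl | rfl
        · exact h.1
        · exact h.2
      exact hle hz


theorem gammaSub_normal (m : ℕ) : (gammaSub B m).Normal := by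
  constructor
  intro x hx g
  have h := gamma_conj (mem_gammaSub.1 hx) g
  rw [sub_eq_add_neg] at h
  exact mem_gammaSub.2 h

theorem step_stab {m : ℕ} (Wm : Set B) (hWfin : Wm.Finite) (hWsub : Wm ⊆ gammaAux B m)
    (hWspan : gammaAux B m ⊆ ↑(AddSubgroup.closure (Wm ∪ gammaAux B (m+1))))
    (H : ℕ → AddSubgroup B) (hmono : Monotone H)
    (hstab1 : ∃ N, ∀ n, N ≤ n → H n ⊓ gammaSub B (m+1) = H N ⊓ gammaSub B (m+1)) :
    ∃ N, ∀ n, N ≤ n → H n ⊓ gammaSub B m = H N ⊓ gammaSub B m := by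
  classical
  obtain ⟨N₂, hN₂⟩ := hstab1
  haveI hKnormal : (gammaSub B (m+1)).Normal := gammaSub_normal (m+1)
  set mk : B →+ B ⧸ gammaSub B (m+1) := QuotientAddGroup.mk' (gammaSub B (m+1)) with hmk
  set T : AddSubgroup (B ⧸ gammaSub B (m+1)) := (gammaSub B m).map mk with hT
  have hTcomm : ∀ a b : ↥T, a + b = b + a := by
    rintro ⟨a, ha⟩ ⟨b, hb⟩
    obtain ⟨xa, hxa, rfl⟩ := ha
    obtain ⟨xb, hxb, rfl⟩ := hb
    apply Subtype.ext
    show mk xa + mk xb = mk xb + mk xa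
    rw [← map_add, ← map_add]
    apply (QuotientAddGroup.mk'_eq_mk' _).2
    refine ⟨-(xa + xb) + (xb + xa), ?_, by rw [add_neg_cancel_left]⟩
    have h := comm_mem_gamma (gamma_neg (mem_gammaSub.1 hxb)) (gamma_zero_univ (-xa))
    rw [sub_neg_eq_add, sub_neg_eq_add] at h
    have e : -(xa + xb) + (xb + xa) = -xb + -xa + xb + xa := by
      simp [neg_add_rev, ← add_assoc]
    rw [e]
    exact mem_gammaSub.2 h
  letI : AddCommGroup ↥T := { (inferInstance : AddGroup ↥T) with add_comm := hTcomm }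
  have hGeq : gammaSub B m = AddSubgroup.closure (Wm ∪ gammaAux B (m+1)) := by
    apply le_antisymm
    · intro z hz
      exact hWspan (mem_gammaSub.1 hz)
    · rw [AddSubgroup.closure_le, gammaSub_coe]
      exact Set.union_subset hWsub (gamma_antitone m)
  have hTclos : T = AddSubgroup.closure (mk '' Wm) := by
    rw [hT, hGeq, AddMonoidHom.map_closure, Set.image_union, AddSubgroup.closure_union]
    have h0 : AddSubgroup.closure (mk '' gammaAux B (m+1)) = ⊥ := by
      apply le_antisymm _ bot_le
      rw [AddSubgroup.closure_le]
      rintro z ⟨x, hx, rfl⟩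
      show mk x ∈ (⊥ : AddSubgroup (B ⧸ gammaSub B (m+1)))
      rw [AddSubgroup.mem_bot]
      exact (QuotientAddGroup.eq_zero_iff x).2 (mem_gammaSub.2 hx)
    rw [h0, sup_bot_eq]
  have hTfg : T.FG := ⟨(hWfin.image mk).toFinset, by rw [Set.Finite.coe_toFinset]; exact hTclos.symm⟩
  haveI : AddGroup.FG ↥T := (AddGroup.fg_iff_addSubgroup_fg T).2 hTfg
  haveI : Module.Finite ℤ ↥T := Module.Finite.iff_addGroup_fg.2 ‹_›
  haveI hNoeth : IsNoetherian ℤ ↥T := inferInstance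
  set C : ℕ → AddSubgroup ↥T := fun n => ((H n ⊓ gammaSub B m).map mk).addSubgroupOf T with hC
  have hCmono : ∀ {i j : ℕ}, i ≤ j → C i ≤ C j := by
    intro i j hij x hx
    exact AddSubgroup.mem_addSubgroupOf.2
      ((AddSubgroup.map_mono (inf_le_inf_right _ (hmono hij))) (AddSubgroup.mem_addSubgroupOf.1 hx))
  obtain ⟨N₁, hN₁⟩ := monotone_stabilizes_iff_noetherian.2 hNoeth
    ⟨fun n => AddSubgroup.toIntSubmodule (C n),
     fun i j hij => AddSubgroup.toIntSubmodule.monotone (hCmono hij)⟩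
  have hCeq : ∀ {i j : ℕ}, N₁ ≤ i → N₁ ≤ j → C i = C j := by
    intro i j hi hj
    have h1 := hN₁ i hi
    have h2 := hN₁ j hj
    exact AddSubgroup.toIntSubmodule.injective (h1.symm.trans h2)
  refine ⟨max N₁ N₂, fun n hn => ?_⟩
  have hNn : max N₁ N₂ ≤ n := hn
  apply le_antisymm
  · intro x hx
    obtain ⟨hxH, hxG⟩ := hx
    have hmkT : mk x ∈ T := ⟨x, hxG, rfl⟩
    have hCn : (⟨mk x, hmkT⟩ : ↥T) ∈ C n :=
      AddSubgroup.mem_addSubgroupOf.2 ⟨x, ⟨hxH, hxG⟩, rfl⟩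
    have hCN : (⟨mk x, hmkT⟩ : ↥T) ∈ C (max N₁ N₂) :=
      (hCeq (le_trans (le_max_left _ _) hn) (le_max_left _ _)) ▸ hCn
    obtain ⟨yy, hyy, hyx⟩ := AddSubgroup.mem_addSubgroupOf.1 hCN
    obtain ⟨z, hzK, hzx⟩ := (QuotientAddGroup.mk'_eq_mk' _).1 hyx
    have hzH : z ∈ H n := by
      have e : z = -yy + x := by rw [← hzx, neg_add_cancel_left]
      rw [e]
      exact (H n).add_mem ((H n).neg_mem (hmono hNn hyy.1)) hxH
    have hzmem : z ∈ H n ⊓ gammaSub B (m+1) := ⟨hzH, hzK⟩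
    have hz2 : z ∈ H (max N₁ N₂) ⊓ gammaSub B (m+1) := by
      rw [hN₂ (max N₁ N₂) (le_max_right _ _)]
      rw [hN₂ n (le_trans (le_max_right _ _) hn)] at hzmem
      exact hzmem
    refine ⟨?_, hxG⟩
    rw [← hzx]
    exact (H (max N₁ N₂)).add_mem hyy.1 hz2.1
  · exact inf_le_inf_right _ (hmono hNn)

end AuxLemmas

/-- Theorem 3.3: an annihilator nilpotent skew brace that is finitely generated
as a skew brace has the ascending chain condition on sub skew braces. -/
theorem stmt7 {B : Type*} [SkewBrace B]
    (hann : AnnNilpotent B) (hfg : SBFinitelyGenerated B) :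
    ACCSubSkewBrace B := by
  intro f hsb hchain
  obtain ⟨n₀, hann0⟩ := hann
  obtain ⟨S, hSfin, hSgen⟩ := hfg
  set H : ℕ → AddSubgroup B := fun n =>
    { carrier := f n
      zero_mem' := (hsb n).1
      add_mem' := fun {a b} ha hb => (hsb n).2.1 a ha b hb
      neg_mem' := fun {a} ha => (hsb n).2.2.1 a ha } with hHdef
  have hmono : Monotone H := monotone_nat_of_le_succ (fun n x hx => hchain n hx)
  have hfgp := fgp S hSfin hSgen
  have htriv : gammaSub B (2 ^ n₀ - 1) = ⊥ := by
    apply le_antisymm _ bot_le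
    intro x hx
    have h := gamma_triv hann0 (mem_gammaSub.1 hx)
    rw [AddSubgroup.mem_bot]
    exact h
  have hstab : ∀ d : ℕ, ∃ N, ∀ n, N ≤ n →
      H n ⊓ gammaSub B (2 ^ n₀ - 1 - d) = H N ⊓ gammaSub B (2 ^ n₀ - 1 - d) := by
    intro d
    induction d with
    | zero =>
      refine ⟨0, fun n _ => ?_⟩
      rw [Nat.sub_zero, htriv, inf_bot_eq, inf_bot_eq]
    | succ d ihd =>
      by_cases hd : d < 2 ^ n₀ - 1
      · have he : 2 ^ n₀ - 1 - d = (2 ^ n₀ - 1 - (d+1)) + 1 := by omega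
        obtain ⟨W, h1, h2, h3⟩ := hfgp (2 ^ n₀ - 1 - (d+1))
        refine step_stab W h1 h2 h3 H hmono ?_
        rw [← he]
        exact ihd
      · have he : 2 ^ n₀ - 1 - (d+1) = 2 ^ n₀ - 1 - d := by omega
        rw [he]
        exact ihd
  obtain ⟨N, hN⟩ := hstab (2 ^ n₀ - 1)
  rw [Nat.sub_self] at hN
  refine ⟨N, fun n hn => ?_⟩
  have h := hN n hn
  have htop : gammaSub B 0 = (⊤ : AddSubgroup B) := rfl
  rw [htop, inf_top_eq, inf_top_eq] at h
  have : (H n : Set B) = (H N : Set B) := congrArg _ h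
  exact this

end SkewBrace
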